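/- arXiv:2410.11113 — 2 statements merged into one kernel-verified Lean document; each statement's English description precedes it below -/
import Mathlib

section
/- Fix $B \ge 2$. Define $g_a(b) := -\frac{e^a}{1+e^a}(b - a) + \log\left(\frac{1+e^b}{1+e^a}\right)$ for $a, b \in [-B^2, B^2]$. Then $\frac{1}{2(e^{B^2} + e^{-B^2} + 2)} (b-a)^2 \le g_a(b) \le \frac{1}{4}(b-a)^2$ for all $a, b \in [-B^2, B^2]$. -/
/-!
With `f x = log (1 + exp x)` the middle term is the Bregman divergence
`f b - f a - f' a * (b - a)`, and `f'' x = 1 / (exp x + exp (-x) + 2)`.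
On `[-B², B²]` this second derivative lies between `1 / (exp (B²) + exp (-B²) + 2)` and `1 / 4`,
and a second derivative bounded below by `m` (above by `M`) makes `f - m x² / 2` convex
(`M x² / 2 - f` convex); the tangent-line inequality for these convex functions gives the bounds.
-/

open Real

theorem ConvexOn.deriv_mul_sub_le_sub {S : Set ℝ} {f : ℝ → ℝ} {f' a b : ℝ}
    (hfc : ConvexOn ℝ S f) (hf : HasDerivAt f f' a) (ha : a ∈ S) (hb : b ∈ S) :
    f' * (b - a) ≤ f b - f a := by
  rcases lt_trichotomy a b with hab | rfl | hab
  · have hslope := hfc.le_slope_of_hasDerivAt ha hb hab hf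
    rwa [slope_def_field, le_div_iff₀ (sub_pos.2 hab)] at hslope
  · simp
  · have hslope := hfc.slope_le_of_hasDerivAt hb ha hab hf
    rw [slope_def_field, div_le_iff₀ (sub_pos.2 hab)] at hslope
    linarith

section Bregman

variable {S : Set ℝ} {f f' f'' : ℝ → ℝ} {a b : ℝ}

theorem mul_sq_le_sub_sub_deriv_mul_of_le_deriv2 (hS : Convex ℝ S) {m : ℝ}
    (hf : ∀ x ∈ S, HasDerivAt f (f' x) x) (hf' : ∀ x ∈ S, HasDerivAt f' (f'' x) x)
    (hm : ∀ x ∈ S, m ≤ f'' x) (ha : a ∈ S) (hb : b ∈ S) :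
    m / 2 * (b - a) ^ 2 ≤ f b - f a - f' a * (b - a) := by
  have hg : ∀ x, HasDerivAt (fun x ↦ m / 2 * x ^ 2) (m * x) x := fun x ↦
    ((hasDerivAt_pow 2 x).const_mul (m / 2)).congr_deriv (by ring)
  have hconv : ConvexOn ℝ S (fun x ↦ f x - m / 2 * x ^ 2) := by
    refine convexOn_of_hasDerivWithinAt2_nonneg hS (f' := fun x ↦ f' x - m * x)
      (f'' := fun x ↦ f'' x - m) ?_ ?_ ?_ ?_
    · exact fun x hx ↦ ((hf x hx).continuousAt.sub (hg x).continuousAt).continuousWithinAt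
    · exact fun x hx ↦ ((hf x (interior_subset hx)).sub (hg x)).hasDerivWithinAt
    · refine fun x hx ↦ HasDerivAt.hasDerivWithinAt ?_
      exact ((hf' x (interior_subset hx)).sub ((hasDerivAt_id x).const_mul m)).congr_deriv (by simp)
    · exact fun x hx ↦ sub_nonneg.2 (hm x (interior_subset hx))
  have htangent := hconv.deriv_mul_sub_le_sub ((hf a ha).sub (hg a)) ha hb
  linear_combination htangent

theorem sub_sub_deriv_mul_le_mul_sq_of_deriv2_le (hS : Convex ℝ S) {M : ℝ}
    (hf : ∀ x ∈ S, HasDerivAt f (f' x) x) (hf' : ∀ x ∈ S, HasDerivAt f' (f'' x) x)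
    (hM : ∀ x ∈ S, f'' x ≤ M) (ha : a ∈ S) (hb : b ∈ S) :
    f b - f a - f' a * (b - a) ≤ M / 2 * (b - a) ^ 2 := by
  have := mul_sq_le_sub_sub_deriv_mul_of_le_deriv2 hS (f := -f) (f' := -f') (f'' := -f'')
    (m := -M) (fun x hx ↦ (hf x hx).neg) (fun x hx ↦ (hf' x hx).neg)
    (fun x hx ↦ neg_le_neg (hM x hx)) ha hb
  simp only [Pi.neg_apply] at this
  linarith

end Bregman

theorem hasDerivAt_log_one_add_exp (x : ℝ) :
    HasDerivAt (fun x ↦ log (1 + exp x)) (exp x / (1 + exp x)) x :=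
  ((hasDerivAt_exp x).const_add 1).log (by positivity)

theorem hasDerivAt_exp_div_one_add_exp (x : ℝ) :
    HasDerivAt (fun x ↦ exp x / (1 + exp x)) (1 / (exp x + exp (-x) + 2)) x := by
  refine ((hasDerivAt_exp x).div ((hasDerivAt_exp x).const_add 1) (by positivity)).congr_deriv ?_
  rw [exp_neg]
  field_simp
  ring

theorem one_div_exp_add_exp_neg_add_two_eq (x : ℝ) :
    1 / (exp x + exp (-x) + 2) = 1 / (2 * cosh x + 2) := by
  rw [cosh_eq]
  ring

theorem one_div_exp_add_exp_neg_add_two_le (x : ℝ) : 1 / (exp x + exp (-x) + 2) ≤ 1 / 4 := by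
  rw [one_div_exp_add_exp_neg_add_two_eq]
  gcongr
  linarith [one_le_cosh x]

theorem one_div_exp_add_exp_neg_add_two_le_of_abs_le {x c : ℝ} (hx : |x| ≤ c) :
    1 / (exp c + exp (-c) + 2) ≤ 1 / (exp x + exp (-x) + 2) := by
  rw [one_div_exp_add_exp_neg_add_two_eq, one_div_exp_add_exp_neg_add_two_eq]
  have : cosh x ≤ cosh c := cosh_le_cosh.2 (hx.trans (le_abs_self c))
  gcongr

theorem stmt_7_general (B : ℝ) (a b : ℝ)
    (ha : a ∈ Set.Icc (-(B ^ 2)) (B ^ 2)) (hb : b ∈ Set.Icc (-(B ^ 2)) (B ^ 2)) :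
    (1 / (2 * (exp (B ^ 2) + exp (-(B ^ 2)) + 2))) * (b - a) ^ 2 ≤
        (-(exp a / (1 + exp a)) * (b - a) + Real.log ((1 + exp b) / (1 + exp a))) ∧
      (-(exp a / (1 + exp a)) * (b - a) + Real.log ((1 + exp b) / (1 + exp a))) ≤
        (1 / 4) * (b - a) ^ 2 := by
  have hf := fun x (_ : x ∈ Set.Icc (-(B ^ 2)) (B ^ 2)) ↦ hasDerivAt_log_one_add_exp x
  have hf' := fun x (_ : x ∈ Set.Icc (-(B ^ 2)) (B ^ 2)) ↦ hasDerivAt_exp_div_one_add_exp x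
  have hlower := mul_sq_le_sub_sub_deriv_mul_of_le_deriv2 (convex_Icc _ _) hf hf'
    (fun x hx ↦ one_div_exp_add_exp_neg_add_two_le_of_abs_le (abs_le.2 hx)) ha hb
  have hupper := sub_sub_deriv_mul_le_mul_sq_of_deriv2_le (convex_Icc _ _) hf hf'
    (fun x _ ↦ one_div_exp_add_exp_neg_add_two_le x) ha hb
  rw [log_div (by positivity) (by positivity), mul_comm 2, ← div_div]
  constructor
  · linarith
  · linarith [sq_nonneg (b - a)]

theorem stmt_7 (B : ℝ) (hB : 2 ≤ B) (a b : ℝ)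
    (ha : a ∈ Set.Icc (-(B ^ 2)) (B ^ 2)) (hb : b ∈ Set.Icc (-(B ^ 2)) (B ^ 2)) :
    (1 / (2 * (exp (B ^ 2) + exp (-(B ^ 2)) + 2))) * (b - a) ^ 2 ≤
        (-(exp a / (1 + exp a)) * (b - a) + Real.log ((1 + exp b) / (1 + exp a))) ∧
      (-(exp a / (1 + exp a)) * (b - a) + Real.log ((1 + exp b) / (1 + exp a))) ≤
        (1 / 4) * (b - a) ^ 2 :=
  stmt_7_general B a b ha hb
end

section
/- Let $Y$ be a $\{0,1\}$-valued random variable and $X$ a random variable with $\mathbb{E}[Y \mid X] = \frac{e^{B f_0(X)}}{1 + e^{B f_0(X)}}$ for a constant $B \ge 2$ and a measurable function $f_0$ with $\|f_0\|_\infty \le 1$. Define the logistic criterion $\ell(Z, f) = -Y B f(X) + \log(1 + e^{B f(X)})$. Then for any measurable $f$ with $\|f\|_\infty \le B$, $c_1 \, \mathbb{E}[(f(X) - f_0(X))^2] \le \mathbb{E}[\ell(Z, f)] - \mathbb{E}[\ell(Z, f_0)] \le \frac{B^2}{4} \mathbb{E}[(f(X) - f_0(X))^2]$, where $c_1 = \frac{B^2}{2(e^{B^2}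 + e^{-B^2} + 2)}$. -/
/-!
With `a = B f₀(X)` and `b = B f(X)`, the excess risk is `𝔼[g_a(b)]` for the Bregman divergence
`g_a(b) = softplus b - softplus a - σ(a) (b - a)` of `softplus x = log (1 + eˣ)`: conditioning on
`X` replaces `𝔼[(b - a) Y]` by `𝔼[(b - a) σ(a)]`. Since `softplus'' = σ (1 - σ) = (eˣ + e⁻ˣ + 2)⁻¹`
lies between `(e^{B²} + e^{-B²} + 2)⁻¹` and `1/4` on `[-B², B²]`, Taylor's theorem squeezes `g_a(b)`
between the corresponding multiples of `(b - a)² / 2 = B² (f - f₀)²(X) / 2`.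
-/

open MeasureTheory Real Set

lemma ConvexOn.add_mul_sub_le_of_hasDerivAt {S : Set ℝ} {f : ℝ → ℝ} {x y f' : ℝ}
    (hf : ConvexOn ℝ S f) (hx : x ∈ S) (hy : y ∈ S) (hd : HasDerivAt f f' x) :
    f x + f' * (y - x) ≤ f y := by
  rcases lt_trichotomy x y with hxy | rfl | hxy
  · have := hf.le_slope_of_hasDerivAt hx hy hxy hd
    rw [slope_def_field, le_div_iff₀ (sub_pos.2 hxy)] at this
    linarith
  · simp
  · have := hf.slope_le_of_hasDerivAt hy hx hxy hd
    rw [slope_def_field, div_le_iff₀ (sub_pos.2 hxy)] at this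
    linarith

section TaylorBounds

variable {S : Set ℝ} {f f' f'' : ℝ → ℝ} {a b : ℝ}

lemma mul_sq_le_sub_sub_mul_of_le_deriv2 (hS : Convex ℝ S)
    (hf : ∀ x ∈ S, HasDerivAt f (f' x) x) (hf' : ∀ x ∈ S, HasDerivAt f' (f'' x) x)
    {m : ℝ} (hm : ∀ x ∈ S, m ≤ f'' x) (ha : a ∈ S) (hb : b ∈ S) :
    m / 2 * (b - a) ^ 2 ≤ f b - f a - f' a * (b - a) := by
  have hψ : ∀ x ∈ S, HasDerivAt (fun x => f x - m / 2 * x ^ 2) (f' x - m * x) x := fun x hx =>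
    ((hf x hx).sub ((hasDerivAt_pow 2 x).const_mul (m / 2))).congr_deriv (by ring)
  have hψ' : ∀ x ∈ S, HasDerivAt (fun x => f' x - m * x) (f'' x - m) x := fun x hx =>
    ((hf' x hx).sub ((hasDerivAt_id x).const_mul m)).congr_deriv (by simp)
  have hconv : ConvexOn ℝ S fun x => f x - m / 2 * x ^ 2 :=
    convexOn_of_hasDerivWithinAt2_nonneg hS
      (fun x hx => (hψ x hx).continuousAt.continuousWithinAt)
      (fun x hx => (hψ x (interior_subset hx)).hasDerivWithinAt)
      (fun x hx => (hψ' x (interior_subset hx)).hasDerivWithinAt)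
      (fun x hx => sub_nonneg.2 (hm x (interior_subset hx)))
  have := hconv.add_mul_sub_le_of_hasDerivAt ha hb (hψ a ha)
  linarith

lemma sub_sub_mul_le_mul_sq_of_deriv2_le (hS : Convex ℝ S)
    (hf : ∀ x ∈ S, HasDerivAt f (f' x) x) (hf' : ∀ x ∈ S, HasDerivAt f' (f'' x) x)
    {M : ℝ} (hM : ∀ x ∈ S, f'' x ≤ M) (ha : a ∈ S) (hb : b ∈ S) :
    f b - f a - f' a * (b - a) ≤ M / 2 * (b - a) ^ 2 := by
  have := mul_sq_le_sub_sub_mul_of_le_deriv2 (f := -f) (f' := -f') (f'' := -f'') hS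
    (fun x hx => (hf x hx).neg) (fun x hx => (hf' x hx).neg)
    (fun x hx => neg_le_neg (hM x hx)) ha hb
  simp only [Pi.neg_apply] at this
  linarith

end TaylorBounds

namespace Real

noncomputable def softplus (x : ℝ) : ℝ := log (1 + exp x)

lemma exp_div_one_add_exp_eq_sigmoid (x : ℝ) : exp x / (1 + exp x) = sigmoid x := by
  rw [sigmoid_def, exp_neg]
  field_simp
  ring

lemma hasDerivAt_softplus (x : ℝ) : HasDerivAt softplus (sigmoid x) x := by
  rw [← exp_div_one_add_exp_eq_sigmoid]
  exact ((hasDerivAt_exp x).const_add 1).log (by positivity)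

@[fun_prop]
lemma continuous_softplus : Continuous softplus :=
  continuous_iff_continuousAt.2 fun x => (hasDerivAt_softplus x).continuousAt

lemma sigmoid_mul_one_sub_sigmoid (x : ℝ) :
    sigmoid x * (1 - sigmoid x) = (exp x + exp (-x) + 2)⁻¹ := by
  rw [← sigmoid_neg, sigmoid_def, sigmoid_def, neg_neg, ← mul_inv]
  congr 1
  have : exp x * exp (-x) = 1 := by rw [← exp_add, add_neg_cancel, exp_zero]
  linear_combination this

lemma sigmoid_mul_one_sub_sigmoid_le (x : ℝ) : sigmoid x * (1 - sigmoid x) ≤ 1 / 4 := by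
  nlinarith [sq_nonneg (2 * sigmoid x - 1)]

lemma inv_le_sigmoid_mul_one_sub_sigmoid {x M : ℝ} (hx : |x| ≤ M) :
    (exp M + exp (-M) + 2)⁻¹ ≤ sigmoid x * (1 - sigmoid x) := by
  rw [sigmoid_mul_one_sub_sigmoid]
  refine inv_anti₀ (by positivity) ?_
  have := cosh_le_cosh.2 (hx.trans (le_abs_self M))
  rw [cosh_eq, cosh_eq] at this
  linarith

noncomputable def softplusBregman (a b : ℝ) : ℝ := softplus b - softplus a - sigmoid a * (b - a)

lemma continuous_softplusBregman : Continuous fun p : ℝ × ℝ => softplusBregman p.1 p.2 := by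
  unfold softplusBregman
  fun_prop

lemma softplusBregman_le (a b : ℝ) : softplusBregman a b ≤ 1 / 8 * (b - a) ^ 2 := by
  have := sub_sub_mul_le_mul_sq_of_deriv2_le convex_univ (fun x _ => hasDerivAt_softplus x)
    (fun x _ => hasDerivAt_sigmoid x) (fun x _ => sigmoid_mul_one_sub_sigmoid_le x)
    (mem_univ a) (mem_univ b)
  rw [softplusBregman]
  linarith

lemma le_softplusBregman {M a b : ℝ} (ha : |a| ≤ M) (hb : |b| ≤ M) :
    (exp M + exp (-M) + 2)⁻¹ / 2 * (b - a) ^ 2 ≤ softplusBregman a b :=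
  mul_sq_le_sub_sub_mul_of_le_deriv2 (convex_Icc (-M) M)
    (fun x _ => hasDerivAt_softplus x) (fun x _ => hasDerivAt_sigmoid x)
    (fun _ hx => inv_le_sigmoid_mul_one_sub_sigmoid (abs_le.2 hx)) (abs_le.1 ha) (abs_le.1 hb)

end Real

/-- The paper's `ℓ(Z, f)` is `logisticLoss Y (B * f X)`. -/
noncomputable def logisticLoss (y s : ℝ) : ℝ := -(y * s) + softplus s

namespace MeasureTheory

variable {Ω : Type*} {m m₀ : MeasurableSpace Ω} {μ : Measure Ω}

lemma Integrable.continuous_comp_of_abs_le [IsFiniteMeasure μ] {φ : ℝ → ℝ}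
    (hφ : Continuous φ) {g : Ω → ℝ} (hg : AEStronglyMeasurable g μ) {C : ℝ}
    (hgC : ∀ ω, |g ω| ≤ C) : Integrable (fun ω => φ (g ω)) μ := by
  obtain ⟨K, hK⟩ :=
    (isCompact_Icc (a := -C) (b := C)).exists_bound_of_continuousOn hφ.continuousOn
  exact .of_bound (hφ.comp_aestronglyMeasurable hg) K
    (ae_of_all _ fun ω => hK _ (abs_le.1 (hgC ω)))

lemma integrable_of_condExp_pos [NeZero μ] {Y : Ω → ℝ}
    (h : ∀ᵐ ω ∂μ, 0 < μ[Y | m] ω) : Integrable Y μ := by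
  by_contra hY
  rw [condExp_of_not_integrable hY] at h
  obtain ⟨ω, hω⟩ := h.exists
  exact hω.false

lemma integral_mul_eq_integral_mul_condExp (hm : m ≤ m₀) [IsFiniteMeasure μ] {g Y : Ω → ℝ}
    (hg : StronglyMeasurable[m] g) {C : ℝ} (hgC : ∀ ω, |g ω| ≤ C) (hY : Integrable Y μ) :
    ∫ ω, g ω * Y ω ∂μ = ∫ ω, g ω * μ[Y | m] ω ∂μ := by
  rw [← integral_condExp hm]
  exact integral_congr_ae <|
    condExp_stronglyMeasurable_mul_of_bound hm hg hY C (ae_of_all _ hgC)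

section LogisticLoss

variable [IsFiniteMeasure μ] {a b Y : Ω → ℝ} {C : ℝ}

lemma integral_logisticLoss_sub_eq (hm : m ≤ m₀)
    (ha : StronglyMeasurable[m] a) (hb : StronglyMeasurable[m] b)
    (haC : ∀ ω, |a ω| ≤ C) (hbC : ∀ ω, |b ω| ≤ C) (hY : Integrable Y μ)
    (hcond : μ[Y | m] =ᵐ[μ] fun ω => sigmoid (a ω)) :
    (∫ ω, logisticLoss (Y ω) (b ω) ∂μ) - ∫ ω, logisticLoss (Y ω) (a ω) ∂μ =
      ∫ ω, softplusBregman (a ω) (b ω) ∂μ := by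
  have ha₀ : AEStronglyMeasurable a μ := (ha.mono hm).aestronglyMeasurable
  have hb₀ : AEStronglyMeasurable b μ := (hb.mono hm).aestronglyMeasurable
  have hbaC : ∀ ω, |b ω - a ω| ≤ C + C :=
    fun ω => (abs_sub _ _).trans (add_le_add (hbC ω) (haC ω))
  have hspa := Integrable.continuous_comp_of_abs_le continuous_softplus ha₀ haC
  have hspb := Integrable.continuous_comp_of_abs_le continuous_softplus hb₀ hbC
  have hsp : Integrable (fun ω => softplus (b ω) - softplus (a ω)) μ := hspb.sub hspa
  have hba : Integrable (fun ω => b ω - a ω) μ :=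
    Integrable.continuous_comp_of_abs_le continuous_id (hb₀.sub ha₀) hbaC
  have hbaY : Integrable (fun ω => (b ω - a ω) * Y ω) μ :=
    hY.bdd_mul (hb₀.sub ha₀) (ae_of_all _ hbaC)
  have hbaσ : Integrable (fun ω => sigmoid (a ω) * (b ω - a ω)) μ :=
    hba.bdd_mul (continuous_sigmoid.comp_aestronglyMeasurable ha₀) (c := 1)
      (ae_of_all _ fun ω => by
        rw [norm_of_nonneg (sigmoid_nonneg _)]; exact sigmoid_le_one _)
  have hpull : ∫ ω, (b ω - a ω) * Y ω ∂μ = ∫ ω, sigmoid (a ω) * (b ω - a ω) ∂μ := by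
    rw [integral_mul_eq_integral_mul_condExp (g := fun ω => b ω - a ω) hm (hb.sub ha) hbaC hY]
    refine integral_congr_ae (hcond.mono fun ω hω => ?_)
    simp only [hω, mul_comm]
  have hlossa : Integrable (fun ω => logisticLoss (Y ω) (a ω)) μ :=
    (hY.mul_bdd ha₀ (ae_of_all _ haC)).neg.add hspa
  have hlossb : Integrable (fun ω => logisticLoss (Y ω) (b ω)) μ :=
    (hY.mul_bdd hb₀ (ae_of_all _ hbC)).neg.add hspb
  calc (∫ ω, logisticLoss (Y ω) (b ω) ∂μ) - ∫ ω, logisticLoss (Y ω) (a ω) ∂μ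
      = ∫ ω, (softplus (b ω) - softplus (a ω) - (b ω - a ω) * Y ω) ∂μ := by
        rw [← integral_sub hlossb hlossa]
        exact integral_congr_ae (ae_of_all _ fun ω => by simp only [logisticLoss]; ring)
    _ = ∫ ω, softplusBregman (a ω) (b ω) ∂μ := by
        rw [integral_sub hsp hbaY, hpull, ← integral_sub hsp hbaσ]
        rfl

lemma integral_logisticLoss_sub_bounds (hm : m ≤ m₀)
    (ha : StronglyMeasurable[m] a) (hb : StronglyMeasurable[m] b)
    (haC : ∀ ω, |a ω| ≤ C) (hbC : ∀ ω, |b ω| ≤ C) (hY : Integrable Y μ)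
    (hcond : μ[Y | m] =ᵐ[μ] fun ω => sigmoid (a ω)) :
    (exp C + exp (-C) + 2)⁻¹ / 2 * ∫ ω, (b ω - a ω) ^ 2 ∂μ ≤
        (∫ ω, logisticLoss (Y ω) (b ω) ∂μ) - ∫ ω, logisticLoss (Y ω) (a ω) ∂μ ∧
      (∫ ω, logisticLoss (Y ω) (b ω) ∂μ) - ∫ ω, logisticLoss (Y ω) (a ω) ∂μ ≤
        1 / 8 * ∫ ω, (b ω - a ω) ^ 2 ∂μ := by
  have ha₀ := ha.mono hm
  have hb₀ := hb.mono hm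
  have hsq : Integrable (fun ω => (b ω - a ω) ^ 2) μ :=
    Integrable.continuous_comp_of_abs_le (continuous_pow 2)
      (hb₀.sub ha₀).aestronglyMeasurable (C := C + C)
      fun ω => (abs_sub _ _).trans (add_le_add (hbC ω) (haC ω))
  have hlower := fun ω => le_softplusBregman (haC ω) (hbC ω)
  have hupper := fun ω => softplusBregman_le (a ω) (b ω)
  have hD : Integrable (fun ω => softplusBregman (a ω) (b ω)) μ :=
    integrable_of_le_of_le
      (continuous_softplusBregman.comp_stronglyMeasurable (ha₀.prodMk hb₀)).aestronglyMeasurable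
      (ae_of_all _ hlower) (ae_of_all _ hupper) (hsq.const_mul _) (hsq.const_mul _)
  rw [integral_logisticLoss_sub_eq hm ha hb haC hbC hY hcond, ← integral_const_mul,
    ← integral_const_mul]
  exact ⟨integral_mono (hsq.const_mul _) hD hlower, integral_mono hD (hsq.const_mul _) hupper⟩

end LogisticLoss

end MeasureTheory

theorem stmt_10_general {Ω 𝓧 : Type*} [MeasurableSpace Ω] [MeasurableSpace 𝓧]
    (μ : Measure Ω) [IsProbabilityMeasure μ]
    (X : Ω → 𝓧) (hX : Measurable X)
    (Y : Ω → ℝ)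
    (B : ℝ) (hB : 2 ≤ B)
    (f0 : 𝓧 → ℝ) (hf0meas : Measurable f0) (hf0bdd : ∀ x, |f0 x| ≤ 1)
    (hcond : (fun ω => exp (B * f0 (X ω)) / (1 + exp (B * f0 (X ω)))) =ᵐ[μ]
      μ[Y | MeasurableSpace.comap X inferInstance]) :
    ∀ f : 𝓧 → ℝ, Measurable f → (∀ x, |f x| ≤ B) →
      (B ^ 2 / (2 * (exp (B ^ 2) + exp (-(B ^ 2)) + 2))) *
          ∫ ω, (f (X ω) - f0 (X ω)) ^ 2 ∂μ ≤
        (∫ ω, (-(Y ω * B * f (X ω)) + Real.log (1 + exp (B * f (X ω)))) ∂μ) -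
          (∫ ω, (-(Y ω * B * f0 (X ω)) + Real.log (1 + exp (B * f0 (X ω)))) ∂μ) ∧
      (∫ ω, (-(Y ω * B * f (X ω)) + Real.log (1 + exp (B * f (X ω)))) ∂μ) -
          (∫ ω, (-(Y ω * B * f0 (X ω)) + Real.log (1 + exp (B * f0 (X ω)))) ∂μ) ≤
        (B ^ 2 / 4) * ∫ ω, (f (X ω) - f0 (X ω)) ^ 2 ∂μ := by
  intro f hf hfB
  simp only [exp_div_one_add_exp_eq_sigmoid] at hcond
  have hscaled : ∀ g : 𝓧 → ℝ, Measurable g → (∀ x, |g x| ≤ B) →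
      StronglyMeasurable[MeasurableSpace.comap X inferInstance] (fun ω => B * g (X ω)) ∧
        ∀ ω, |B * g (X ω)| ≤ B ^ 2 := fun g hg hgB =>
    ⟨((hg.comp (comap_measurable X)).const_mul B).stronglyMeasurable, fun ω => by
      rw [abs_mul, abs_of_pos (by linarith), sq]
      exact mul_le_mul_of_nonneg_left (hgB _) (by linarith)⟩
  obtain ⟨ha, haB⟩ := hscaled f0 hf0meas fun x => (hf0bdd x).trans (by linarith)
  obtain ⟨hb, hbB⟩ := hscaled f hf hfB
  have hY : Integrable Y μ :=
    integrable_of_condExp_pos (hcond.mono fun ω hω => by rw [← hω]; exact sigmoid_pos _)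
  have hloss : ∀ g : 𝓧 → ℝ,
      (fun ω => -(Y ω * B * g (X ω)) + Real.log (1 + exp (B * g (X ω)))) =
        fun ω => logisticLoss (Y ω) (B * g (X ω)) :=
    fun g => funext fun ω => by rw [logisticLoss, softplus, mul_assoc]
  have hsq : ∫ ω, (B * f (X ω) - B * f0 (X ω)) ^ 2 ∂μ =
      B ^ 2 * ∫ ω, (f (X ω) - f0 (X ω)) ^ 2 ∂μ := by
    rw [← integral_const_mul]
    exact integral_congr_ae (ae_of_all _ fun ω => by ring)
  obtain ⟨hlower, hupper⟩ :=
    integral_logisticLoss_sub_bounds hX.comap_le ha hb haB hbB hY hcond.symm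
  rw [hloss, hloss]
  rw [hsq] at hlower hupper
  have hI : 0 ≤ ∫ ω, (f (X ω) - f0 (X ω)) ^ 2 ∂μ := integral_nonneg fun ω => sq_nonneg _
  constructor
  · convert hlower using 1
    field_simp
  · exact hupper.trans (by nlinarith [sq_nonneg B])

theorem stmt_10 {Ω 𝓧 : Type*} [MeasurableSpace Ω] [MeasurableSpace 𝓧]
    (μ : Measure Ω) [IsProbabilityMeasure μ]
    (X : Ω → 𝓧) (hX : Measurable X)
    (Y : Ω → ℝ) (hY01 : ∀ ω, Y ω = 0 ∨ Y ω = 1)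
    (B : ℝ) (hB : 2 ≤ B)
    (f0 : 𝓧 → ℝ) (hf0meas : Measurable f0) (hf0bdd : ∀ x, |f0 x| ≤ 1)
    (hcond : (fun ω => exp (B * f0 (X ω)) / (1 + exp (B * f0 (X ω)))) =ᵐ[μ]
      μ[Y | MeasurableSpace.comap X inferInstance]) :
    ∀ f : 𝓧 → ℝ, Measurable f → (∀ x, |f x| ≤ B) →
      (B ^ 2 / (2 * (exp (B ^ 2) + exp (-(B ^ 2)) + 2))) *
          ∫ ω, (f (X ω) - f0 (X ω)) ^ 2 ∂μ ≤
        (∫ ω, (-(Y ω * B * f (X ω)) + Real.log (1 + exp (B * f (X ω)))) ∂μ) -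
          (∫ ω, (-(Y ω * B * f0 (X ω)) + Real.log (1 + exp (B * f0 (X ω)))) ∂μ) ∧
      (∫ ω, (-(Y ω * B * f (X ω)) + Real.log (1 + exp (B * f (X ω)))) ∂μ) -
          (∫ ω, (-(Y ω * B * f0 (X ω)) + Real.log (1 + exp (B * f0 (X ω)))) ∂μ) ≤
        (B ^ 2 / 4) * ∫ ω, (f (X ω) - f0 (X ω)) ^ 2 ∂μ :=
  stmt_10_general μ X hX Y B hB f0 hf0meas hf0bdd hcond
end
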